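/- arXiv:1905.02881 — 7 statements merged into one kernel-verified Lean document; each statement's English description precedes it below -/
import Mathlib

section
/- The determinant of the n×n matrix with (i,j) entry t^{λⱼ - j + i} · C(λⱼ + n - j, n - i) equals t^{|λ|} · ∏_{1≤i<j≤n} (λᵢ - i - λⱼ + j)/(j - i), where C denotes the binomial coefficient and λ₁ ≥ ... ≥ λₙ ≥ 0 are integers. -/
open Finset

private lemma prod_pairs_eq {n : ℕ} (f : Fin n → Fin n → ℚ) :
    ∏ p ∈ Finset.univ.filter (fun p : Fin n × Fin n => p.1 < p.2), f p.1 p.2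
      = ∏ i, ∏ j ∈ Finset.Ioi i, f i j := by
  rw [Finset.prod_filter, ← Finset.univ_product_univ, Finset.prod_product]
  refine Finset.prod_congr rfl fun i _ => ?_
  rw [← Finset.prod_filter]
  congr 1
  ext j
  simp

private lemma prod_pairs_rev {n : ℕ} (f : Fin n × Fin n → ℚ) :
    ∏ p ∈ Finset.univ.filter (fun p : Fin n × Fin n => p.1 < p.2), f p
      = ∏ p ∈ Finset.univ.filter (fun p : Fin n × Fin n => p.1 < p.2), f (p.2.rev, p.1.rev) := by
  refine Finset.prod_bij' (fun p _ => (p.2.rev, p.1.rev)) (fun p _ => (p.2.rev, p.1.rev))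
    ?_ ?_ ?_ ?_ ?_
  · intro p hp
    simp only [Finset.mem_filter, Finset.mem_univ, true_and] at hp ⊢
    simp only [Fin.lt_def, Fin.val_rev] at hp ⊢
    omega
  · intro p hp
    simp only [Finset.mem_filter, Finset.mem_univ, true_and] at hp ⊢
    simp only [Fin.lt_def, Fin.val_rev] at hp ⊢
    omega
  · intro p hp; simp [Fin.rev_rev]
  · intro p hp; simp [Fin.rev_rev]
  · intro p hp; simp [Fin.rev_rev]

private lemma prod_Ioi_sub {n : ℕ} (i : Fin n) :
    ∏ j ∈ Finset.Ioi i, ((j : ℚ) - (i : ℚ)) = (Nat.factorial (n - 1 - i) : ℚ) := by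
  have h : ∏ j ∈ Finset.Ioi i, ((j : ℚ) - (i : ℚ))
      = ∏ k ∈ Finset.range (n - 1 - i), ((k : ℚ) + 1) := by
    refine Finset.prod_bij' (fun j _ => (j : ℕ) - (i : ℕ) - 1)
      (fun k hk => ⟨(i : ℕ) + 1 + k, by simp at hk; omega⟩) ?_ ?_ ?_ ?_ ?_
    · intro a ha
      simp only [Finset.mem_Ioi, Fin.lt_def] at ha
      simp only [Finset.mem_range]
      omega
    · intro a ha
      simp only [Finset.mem_range] at ha
      simp only [Finset.mem_Ioi, Fin.lt_def]
      omega
    · intro a ha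
      simp only [Finset.mem_Ioi, Fin.lt_def] at ha
      ext
      simp only []
      omega
    · intro a ha
      simp only [Finset.mem_range] at ha
      simp only []
      omega
    · intro a ha
      simp only [Finset.mem_Ioi, Fin.lt_def] at ha
      have h1 : (i : ℕ) ≤ (a : ℕ) := le_of_lt ha
      have h2 : 1 ≤ (a : ℕ) - (i : ℕ) := by omega
      show ((a : ℕ) : ℚ) - ((i : ℕ) : ℚ) = (((a : ℕ) - (i : ℕ) - 1 : ℕ) : ℚ) + 1
      rw [Nat.cast_sub h2, Nat.cast_sub h1]
      ring
  rw [h, ← Finset.prod_range_add_one_eq_factorial, Nat.cast_prod]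
  push_cast
  rfl

/-- The determinant of the `n × n` matrix with `(i,j)` entry
`t^{λ_j - j + i} C(λ_j + n - j, n - i)` (indices `1 ≤ i, j ≤ n`) equals
`t^{|λ|} ∏_{1 ≤ i < j ≤ n} (λ_i - i - λ_j + j)/(j - i)`. -/
theorem lecture_hall_path_det (n : ℕ) (hn : 0 < n) (t : ℚ) (ht : t ≠ 0)
    (lam : Fin n → ℕ) (hpart : ∀ i j : Fin n, i ≤ j → lam j ≤ lam i) :
    Matrix.det (Matrix.of fun i j : Fin n =>
      t ^ ((lam j : ℤ) - ((j : ℕ) + 1) + ((i : ℕ) + 1)) *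
        (Nat.choose (lam j + n - ((j : ℕ) + 1)) (n - ((i : ℕ) + 1)) : ℚ)) =
      t ^ (∑ i, lam i) *
        ∏ p ∈ Finset.univ.filter (fun p : Fin n × Fin n => p.1 < p.2),
          (((lam p.1 : ℚ) - ((p.1 : ℕ) + 1) - (lam p.2 : ℚ) + ((p.2 : ℕ) + 1)) /
            (((p.2 : ℕ) + 1 : ℚ) - ((p.1 : ℕ) + 1))) := by
  classical
  set c : Fin n → ℕ := fun j => lam j + n - ((j : ℕ) + 1) with hc
  have hcle : ∀ j : Fin n, ((j : ℕ) + 1) ≤ lam j + n := fun j => by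
    have := j.isLt; omega
  -- the inner binomial matrix
  set B : Matrix (Fin n) (Fin n) ℚ :=
    Matrix.of fun i j : Fin n => (Nat.choose (c j) ((Fin.rev i : ℕ)) : ℚ) with hB
  -- Step 1: factor out powers of t
  have e1 : (Matrix.of fun i j : Fin n =>
      t ^ ((lam j : ℤ) - ((j : ℕ) + 1) + ((i : ℕ) + 1)) *
        (Nat.choose (lam j + n - ((j : ℕ) + 1)) (n - ((i : ℕ) + 1)) : ℚ))
      = Matrix.of fun i j : Fin n =>
        t ^ ((lam j : ℤ) - ((j : ℕ) + 1)) *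
          ((Matrix.of fun i j : Fin n => t ^ (((i : ℕ) : ℤ) + 1) * B i j) i j) := by
    ext i j
    simp only [Matrix.of_apply, hB]
    have h1 : ((Fin.rev i : ℕ)) = n - ((i : ℕ) + 1) := by
      rw [Fin.val_rev]
    rw [h1, ← mul_assoc, ← zpow_add₀ ht]
  rw [e1]
  have e2 := Matrix.det_mul_row (fun j : Fin n => t ^ ((lam j : ℤ) - ((j : ℕ) + 1)))
    (Matrix.of fun i j : Fin n => t ^ (((i : ℕ) : ℤ) + 1) * B i j)
  rw [e2]
  have e3 := Matrix.det_mul_column (fun i : Fin n => t ^ (((i : ℕ) : ℤ) + 1)) B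
  have e3' : Matrix.det (Matrix.of fun i j : Fin n => t ^ (((i : ℕ) : ℤ) + 1) * B i j)
      = (∏ i : Fin n, t ^ (((i : ℕ) : ℤ) + 1)) * B.det := e3
  rw [e3']
  -- combine the powers of t
  have epow : (∏ j : Fin n, t ^ ((lam j : ℤ) - ((j : ℕ) + 1))) *
      ((∏ i : Fin n, t ^ (((i : ℕ) : ℤ) + 1)) * B.det)
      = t ^ (∑ i, lam i) * B.det := by
    rw [← mul_assoc, ← Finset.prod_mul_distrib]
    congr 1
    have : ∀ j : Fin n, t ^ ((lam j : ℤ) - ((j : ℕ) + 1)) * t ^ (((j : ℕ) : ℤ) + 1)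
        = t ^ (lam j : ℕ) := by
      intro j
      rw [← zpow_add₀ ht, ← zpow_natCast]
      congr 1
      ring
    rw [Finset.prod_congr rfl fun j _ => this j, Finset.prod_pow_eq_pow_sum]
  rw [epow]
  congr 1
  -- Step 2: compute det B
  have hvd := Matrix.det_eval_matrixOfPolynomials_eq_det_vandermonde
      (fun i : Fin n => (c i.rev : ℚ)) (fun k : Fin n => descPochhammer ℚ (k : ℕ))
      (fun k => descPochhammer_natDegree ℚ (k : ℕ)) (fun k => monic_descPochhammer ℚ (k : ℕ))
  set A : Matrix (Fin n) (Fin n) ℚ :=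
    Matrix.of fun i j : Fin n => (descPochhammer ℚ (j : ℕ)).eval ((c (Fin.rev i) : ℚ)) with hA
  have hBA : B = Matrix.of fun i j : Fin n =>
      (((Fin.rev i : ℕ).factorial : ℚ))⁻¹ * ((A.transpose.submatrix Fin.rev Fin.rev) i j) := by
    ext i j
    simp only [hB, hA, Matrix.of_apply, Matrix.submatrix_apply, Matrix.transpose_apply,
      Fin.rev_rev]
    rw [descPochhammer_eval_eq_descFactorial, Nat.descFactorial_eq_factorial_mul_choose]
    push_cast
    rw [← mul_assoc, inv_mul_cancel₀ (by exact_mod_cast (Nat.factorial_pos _).ne'), one_mul]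
  have hsub : (A.transpose.submatrix Fin.rev Fin.rev).det = A.det := by
    have : A.transpose.submatrix Fin.rev Fin.rev
        = A.transpose.submatrix (Fin.revPerm : Fin n ≃ Fin n) (Fin.revPerm : Fin n ≃ Fin n) :=
      rfl
    rw [this, Matrix.det_submatrix_equiv_self, Matrix.det_transpose]
  have hdetB : B.det = (∏ i : Fin n, (((Fin.rev i : ℕ).factorial : ℚ))⁻¹) * A.det := by
    rw [hBA]
    have := Matrix.det_mul_column (fun i : Fin n => (((Fin.rev i : ℕ).factorial : ℚ))⁻¹)
      (A.transpose.submatrix Fin.rev Fin.rev)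
    rw [this, hsub]
  have hAdet : A.det = ∏ i : Fin n, ∏ j ∈ Finset.Ioi i, ((c (Fin.rev j) : ℚ) - (c (Fin.rev i) : ℚ)) := by
    rw [← hvd, Matrix.det_vandermonde]
  rw [hdetB, hAdet]
  -- Step 3: match products
  have hfac : ∀ p : Fin n × Fin n,
      ((lam p.1 : ℚ) - ((p.1 : ℕ) + 1) - (lam p.2 : ℚ) + ((p.2 : ℕ) + 1)) /
        (((p.2 : ℕ) + 1 : ℚ) - ((p.1 : ℕ) + 1))
      = ((c p.1 : ℚ) - (c p.2 : ℚ)) / ((p.2 : ℚ) - (p.1 : ℚ)) := by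
    intro p
    have h1 : (c p.1 : ℚ) = (lam p.1 : ℚ) + n - ((p.1 : ℕ) + 1) := by
      simp only [hc]; rw [Nat.cast_sub (hcle _)]; push_cast; ring
    have h2 : (c p.2 : ℚ) = (lam p.2 : ℚ) + n - ((p.2 : ℕ) + 1) := by
      simp only [hc]; rw [Nat.cast_sub (hcle _)]; push_cast; ring
    rw [h1, h2]; ring_nf
  rw [Finset.prod_congr rfl fun p _ => hfac p, Finset.prod_div_distrib]
  have hN : ∏ p ∈ Finset.univ.filter (fun p : Fin n × Fin n => p.1 < p.2),
      ((c p.1 : ℚ) - (c p.2 : ℚ))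
      = ∏ i : Fin n, ∏ j ∈ Finset.Ioi i, ((c (Fin.rev j) : ℚ) - (c (Fin.rev i) : ℚ)) := by
    rw [prod_pairs_rev (fun p => (c p.1 : ℚ) - (c p.2 : ℚ))]
    exact prod_pairs_eq (fun a b => (c (Fin.rev b) : ℚ) - (c (Fin.rev a) : ℚ))
  have hD : ∏ p ∈ Finset.univ.filter (fun p : Fin n × Fin n => p.1 < p.2),
      ((p.2 : ℚ) - (p.1 : ℚ))
      = ∏ i : Fin n, (((Fin.rev i : ℕ).factorial : ℚ)) := by
    rw [prod_pairs_eq (fun a b => ((b : ℚ) - (a : ℚ)))]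
    refine Finset.prod_congr rfl fun i _ => ?_
    have hrev : (Fin.rev i : ℕ) = n - 1 - (i : ℕ) := by rw [Fin.val_rev]; omega
    rw [prod_Ioi_sub, hrev]
  rw [hN, hD, Finset.prod_inv_distrib, div_eq_mul_inv, mul_comm]
end

section
/- Let λ be a partition with n parts, extended to n+m parts by appending m zeros, and let μ = (λ₁,...,λₙ, 1^r, 0^{m-r}) for 0 ≤ r ≤ m. Then ∏_{1≤i<j≤n+m} (μᵢ - μⱼ + j - i)/(λᵢ - λⱼ + j - i) = ∏_{i=1}^{n} (λᵢ + n - i)/(λᵢ + n + r - i) · ∏_{i=n+1}^{n+r} (n + m + 1 - i)/(n + r + 1 - i). -/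
open Finset

/-!
For `i < j` write the factor as `(μᵢ - μⱼ + j - i) / (λᵢ - λⱼ + j - i)`. Its denominator is
positive because `λ` is a partition, so the factor is `1` unless exactly one of `i, j` lies in the
block `(n, n + r]` where `μ` and `λ` differ. For `i ≤ n` the factors over `j ∈ (n, n + r]` are
`(λᵢ - i + j - 1) / (λᵢ - i + j)`, which telescope to `(λᵢ + n - i) / (λᵢ + n + r - i)`; for
`i ∈ (n, n + r]` those over `j ∈ (n + r, n + m]` are `(j - i + 1) / (j - i)`, which telescope to
`(n + m + 1 - i) / (n + r + 1 - i)`.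
-/

section

variable {K : Type*} [Field K]

theorem Finset.prod_Ioc_add_sub_one_div_add (c : K) {a b : ℕ} (hab : a ≤ b)
    (h : ∀ j ∈ Icc a b, c + j ≠ 0) :
    ∏ j ∈ Ioc a b, (c + j - 1) / (c + j) = (c + a) / (c + b) := by
  induction b, hab using Nat.le_induction with
  | base => simp [div_self (h a (by simp))]
  | succ b hab ih =>
    rw [prod_Ioc_succ_top hab, ih fun j hj => h j (Icc_subset_Icc_right (by omega) hj),
      Nat.cast_succ, ← add_assoc, add_sub_cancel_right, div_mul_div_cancel₀ (h b (by simp [hab]))]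

theorem Finset.prod_Ioc_add_div_add_sub_one (c : K) {a b : ℕ} (hab : a ≤ b)
    (h : ∀ j ∈ Icc a b, c + j ≠ 0) :
    ∏ j ∈ Ioc a b, (c + j) / (c + j - 1) = (c + b) / (c + a) := by
  rw [← inv_div, ← prod_Ioc_add_sub_one_div_add c hab h, ← prod_inv_distrib]
  simp only [inv_div]

def pairRatio (μ ν : ℕ → K) (i j : ℕ) : K :=
  (μ i - μ j + j - i) / (ν i - ν j + j - i)

theorem pairRatio_eq_one {μ ν : ℕ → K} {i j : ℕ} (h : μ i - μ j = ν i - ν j)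
    (hne : ν i - ν j + j - i ≠ 0) : pairRatio μ ν i j = 1 := by
  rw [pairRatio, h, div_self hne]

end

theorem Finset.prod_filter_fst_lt_snd_Icc_product_Icc {α M : Type*} [LinearOrder α]
    [LocallyFiniteOrder α] [CommMonoid M] (a b : α) (f : α → α → M) :
    ∏ p ∈ (Icc a b ×ˢ Icc a b).filter (fun p => p.1 < p.2), f p.1 p.2 =
      ∏ i ∈ Icc a b, ∏ j ∈ Ioc i b, f i j := by
  rw [prod_filter, prod_product]
  refine prod_congr rfl fun i hi => ?_
  rw [← prod_filter]
  congr 1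
  ext j
  simp only [mem_filter, mem_Icc, mem_Ioc] at hi ⊢
  constructor
  · rintro ⟨⟨-, hjb⟩, hij⟩; exact ⟨hij, hjb⟩
  · rintro ⟨hij, hjb⟩; exact ⟨⟨hi.1.trans hij.le, hjb⟩, hij⟩

/- `padZero lam n` is the paper's `λ` extended by zeros and `padOnes lam n r` is `μ`; parts are
indexed from `1`. -/
def padZero (lam : ℕ → ℕ) (n i : ℕ) : ℚ :=
  if i ≤ n then (lam i : ℚ) else 0

def padOnes (lam : ℕ → ℕ) (n r i : ℕ) : ℚ :=
  if i ≤ n then (lam i : ℚ) else if i ≤ n + r then 1 else 0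

section Padding

variable (lam : ℕ → ℕ) {n r i : ℕ}

theorem padZero_of_le (h : i ≤ n) : padZero lam n i = lam i := if_pos h

theorem padZero_of_lt (h : n < i) : padZero lam n i = 0 := if_neg (by omega)

theorem padOnes_of_le (h : i ≤ n) : padOnes lam n r i = lam i := if_pos h

theorem padOnes_of_lt_of_le (h₁ : n < i) (h₂ : i ≤ n + r) : padOnes lam n r i = 1 := by
  rw [padOnes, if_neg (by omega), if_pos h₂]

theorem padOnes_of_lt (h : n + r < i) : padOnes lam n r i = 0 := by
  rw [padOnes, if_neg (by omega), if_neg (by omega)]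

variable {lam}
variable (hpart : ∀ i j : ℕ, 1 ≤ i → i ≤ j → j ≤ n → lam j ≤ lam i)
include hpart

theorem padZero_sub_padZero_add_pos {j : ℕ} (hi : 1 ≤ i) (hij : i < j) :
    0 < padZero lam n i - padZero lam n j + j - i := by
  have hij' : (i : ℚ) < j := by exact_mod_cast hij
  by_cases hjn : j ≤ n
  · have : (lam j : ℚ) ≤ lam i := by exact_mod_cast hpart i j hi hij.le hjn
    rw [padZero_of_le lam (hij.le.trans hjn), padZero_of_le lam hjn]
    linarith
  · rw [padZero_of_lt lam (not_le.1 hjn)]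
    by_cases hin : i ≤ n
    · have : (0 : ℚ) ≤ lam i := Nat.cast_nonneg _
      rw [padZero_of_le lam hin]
      linarith
    · rw [padZero_of_lt lam (not_le.1 hin)]
      linarith

theorem prod_Ioc_pairRatio_of_le (m : ℕ) (hr : r ≤ m)
    (hpos : ∀ i : ℕ, 1 ≤ i → i ≤ n → 1 ≤ lam i) (hi : 1 ≤ i) (hin : i ≤ n) :
    ∏ j ∈ Ioc i (n + m), pairRatio (padOnes lam n r) (padZero lam n) i j =
      ((lam i : ℚ) + n - i) / ((lam i : ℚ) + n + r - i) := by
  rw [← prod_Ioc_consecutive _ (hin.trans (Nat.le_add_right n r)) (by omega : n + r ≤ n + m),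
    ← prod_Ioc_consecutive _ hin (Nat.le_add_right n r)]
  have hparts : ∏ j ∈ Ioc i n, pairRatio (padOnes lam n r) (padZero lam n) i j = 1 :=
    prod_eq_one fun j hj => by
      have hj := mem_Ioc.1 hj
      refine pairRatio_eq_one ?_ (padZero_sub_padZero_add_pos hpart hi hj.1).ne'
      rw [padOnes_of_le lam hin, padOnes_of_le lam hj.2, padZero_of_le lam hin,
        padZero_of_le lam hj.2]
  have hzeros : ∏ j ∈ Ioc (n + r) (n + m), pairRatio (padOnes lam n r) (padZero lam n) i j = 1 :=
    prod_eq_one fun j hj => by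
      have hj := mem_Ioc.1 hj
      refine pairRatio_eq_one ?_ (padZero_sub_padZero_add_pos hpart hi (by omega)).ne'
      rw [padOnes_of_le lam hin, padOnes_of_lt lam hj.1, padZero_of_le lam hin,
        padZero_of_lt lam (by omega)]
  have hones : ∏ j ∈ Ioc n (n + r), pairRatio (padOnes lam n r) (padZero lam n) i j =
      ∏ j ∈ Ioc n (n + r), ((lam i - i : ℚ) + j - 1) / ((lam i - i : ℚ) + j) :=
    prod_congr rfl fun j hj => by
      have hj := mem_Ioc.1 hj
      rw [pairRatio, padOnes_of_le lam hin, padOnes_of_lt_of_le lam hj.1 hj.2,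
        padZero_of_le lam hin, padZero_of_lt lam hj.1]
      ring
  have hden : ∀ j ∈ Icc n (n + r), (lam i - i : ℚ) + j ≠ 0 := fun j hj => by
    have : (1 : ℚ) ≤ lam i := by exact_mod_cast hpos i hi hin
    have : (i : ℚ) ≤ j := by exact_mod_cast hin.trans (mem_Icc.1 hj).1
    exact ne_of_gt (by linarith)
  rw [hparts, hzeros, hones, prod_Ioc_add_sub_one_div_add _ (Nat.le_add_right n r) hden]
  push_cast
  ring

theorem prod_Ioc_pairRatio_of_lt_of_le (m : ℕ) (hr : r ≤ m) (hni : n < i)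
    (hir : i ≤ n + r) :
    ∏ j ∈ Ioc i (n + m), pairRatio (padOnes lam n r) (padZero lam n) i j =
      ((n : ℚ) + m + 1 - i) / ((n : ℚ) + r + 1 - i) := by
  rw [← prod_Ioc_consecutive _ hir (by omega : n + r ≤ n + m)]
  have hones : ∏ j ∈ Ioc i (n + r), pairRatio (padOnes lam n r) (padZero lam n) i j = 1 :=
    prod_eq_one fun j hj => by
      have hj := mem_Ioc.1 hj
      refine pairRatio_eq_one ?_ (padZero_sub_padZero_add_pos hpart (by omega) hj.1).ne'
      rw [padOnes_of_lt_of_le lam hni hir, padOnes_of_lt_of_le lam (by omega) hj.2,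
        padZero_of_lt lam hni, padZero_of_lt lam (by omega), sub_self, sub_self]
  have hzeros : ∏ j ∈ Ioc (n + r) (n + m), pairRatio (padOnes lam n r) (padZero lam n) i j =
      ∏ j ∈ Ioc (n + r) (n + m), ((1 - i : ℚ) + j) / ((1 - i : ℚ) + j - 1) :=
    prod_congr rfl fun j hj => by
      have hj := mem_Ioc.1 hj
      rw [pairRatio, padOnes_of_lt_of_le lam hni hir, padOnes_of_lt lam hj.1,
        padZero_of_lt lam hni, padZero_of_lt lam (by omega)]
      ring
  have hden : ∀ j ∈ Icc (n + r) (n + m), (1 - i : ℚ) + j ≠ 0 := fun j hj => by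
    have : (i : ℚ) ≤ j := by exact_mod_cast hir.trans (mem_Icc.1 hj).1
    exact ne_of_gt (by linarith)
  rw [hones, hzeros, one_mul, prod_Ioc_add_div_add_sub_one _ (by omega) hden]
  push_cast
  ring

theorem prod_Ioc_pairRatio_of_lt (m : ℕ) (hri : n + r < i) :
    ∏ j ∈ Ioc i (n + m), pairRatio (padOnes lam n r) (padZero lam n) i j = 1 :=
  prod_eq_one fun j hj => by
    have hj := mem_Ioc.1 hj
    refine pairRatio_eq_one ?_ (padZero_sub_padZero_add_pos hpart (by omega) hj.1).ne'
    rw [padOnes_of_lt lam hri, padOnes_of_lt lam (by omega), padZero_of_lt lam (by omega),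
      padZero_of_lt lam (by omega)]

end Padding

/-- Let `λ₁ ≥ ⋯ ≥ λ_n ≥ 1` be extended by `m` zeros, and let
`μ = (λ₁, …, λ_n, 1^r, 0^{m-r})` with `0 ≤ r ≤ m`.  Then
`∏_{1≤i<j≤n+m} (μ_i - μ_j + j - i)/(λ_i - λ_j + j - i)
  = ∏_{i=1}^{n} (λ_i + n - i)/(λ_i + n + r - i) ·
    ∏_{i=n+1}^{n+r} (n + m + 1 - i)/(n + r + 1 - i)`. -/
theorem first_dual_path_ratio (n m r : ℕ) (hr : r ≤ m) (lam : ℕ → ℕ)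
    (hpart : ∀ i j : ℕ, 1 ≤ i → i ≤ j → j ≤ n → lam j ≤ lam i)
    (hpos : ∀ i : ℕ, 1 ≤ i → i ≤ n → 1 ≤ lam i) :
    (∏ p ∈ (Finset.Icc 1 (n + m) ×ˢ Finset.Icc 1 (n + m)).filter
        (fun p : ℕ × ℕ => p.1 < p.2),
      (((if p.1 ≤ n then (lam p.1 : ℚ) else if p.1 ≤ n + r then 1 else 0) -
          (if p.2 ≤ n then (lam p.2 : ℚ) else if p.2 ≤ n + r then 1 else 0) +
          (p.2 : ℚ) - p.1) /
        ((if p.1 ≤ n then (lam p.1 : ℚ) else 0) -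
          (if p.2 ≤ n then (lam p.2 : ℚ) else 0) + (p.2 : ℚ) - p.1))) =
      (∏ i ∈ Finset.Icc 1 n,
          (((lam i : ℚ) + n - i) / ((lam i : ℚ) + n + r - i))) *
        ∏ i ∈ Finset.Icc (n + 1) (n + r),
          (((n : ℚ) + m + 1 - i) / ((n : ℚ) + r + 1 - i)) := by
  change ∏ p ∈ _, pairRatio (padOnes lam n r) (padZero lam n) (p : ℕ × ℕ).1 p.2 = _
  have hIcc : Icc 1 (n + m) = Ioc 0 (n + m) := by simpa using Icc_add_one_left_eq_Ioc 0 (n + m)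
  rw [prod_filter_fst_lt_snd_Icc_product_Icc, hIcc,
    ← prod_Ioc_consecutive _ (Nat.zero_le (n + r)) (by omega : n + r ≤ n + m),
    ← prod_Ioc_consecutive _ (Nat.zero_le n) (Nat.le_add_right n r),
    prod_congr rfl fun i hi => prod_Ioc_pairRatio_of_le hpart m hr hpos
      (mem_Ioc.1 hi).1 (mem_Ioc.1 hi).2,
    prod_congr rfl fun i hi => prod_Ioc_pairRatio_of_lt_of_le hpart m hr
      (mem_Ioc.1 hi).1 (mem_Ioc.1 hi).2,
    prod_congr rfl fun i hi => prod_Ioc_pairRatio_of_lt hpart m (mem_Ioc.1 hi).1,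
    prod_const_one, mul_one, ← Icc_add_one_left_eq_Ioc, ← Icc_add_one_left_eq_Ioc, zero_add]
end

section
/- For a fixed integer r ≥ 1 and integers b, n, m with 1 ≤ r ≤ b ≤ n ≤ n+m, and λ a partition of n+m parts with λ_{b-r+1} = λ_{b-r+2} = ... = λ_b (a constant block), define μ by μᵢ = λᵢ - 1 for b - r + 1 ≤ i ≤ b and μᵢ = λᵢ otherwise. Then ∏_{1≤i<j≤n+m} (μᵢ - μⱼ + j - i)/(λᵢ - λⱼ + j - i) = ∏_{1≤i≤b-r} (λᵢ - λ_b + b + 1 - i)/(λᵢ - λ_b + b - r + 1 - i) · ∏_{b+1≤j≤n+m} (λ_b - λⱼ + j - b - 1)/(λ_b - λⱼ + j - b + r - 1). -/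
lemma tele_aux (f : ℕ → ℚ) : ∀ (a c : ℕ), a ≤ c → (∀ j, a ≤ j → j ≤ c → f j ≠ 0) →
    ∏ j ∈ Finset.Icc a c, f (j + 1) / f j = f (c + 1) / f a := by
  intro a c
  induction c with
  | zero =>
    intro hab _
    interval_cases a
    simp
  | succ c ih =>
    intro hab h
    rcases Nat.lt_or_ge a (c + 1) with h1 | h1
    · have hab' : a ≤ c := Nat.lt_succ_iff.mp h1
      rw [Finset.prod_Icc_succ_top hab,
        ih hab' (fun j hj hj' => h j hj (le_trans hj' (Nat.le_succ c)))]
      have h1 : f (c + 1) ≠ 0 := h (c + 1) (by omega) le_rfl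
      have h2 : f a ≠ 0 := h a le_rfl (by omega)
      field_simp
    · have : a = c + 1 := le_antisymm hab h1
      subst this
      simp

/-- Let `λ` be a partition with `n + m` parts whose block
`λ_{b-r+1} = ⋯ = λ_b` is constant (`1 ≤ r ≤ b ≤ n ≤ n + m`), and let `μ` be
obtained from `λ` by decreasing each part of the block by one (assuming `μ` is
still a partition).  Then
`∏_{1≤i<j≤n+m} (μ_i - μ_j + j - i)/(λ_i - λ_j + j - i)
 = ∏_{1≤i≤b-r} (λ_i - λ_b + b + 1 - i)/(λ_i - λ_b + b - r + 1 - i) ·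
   ∏_{b+1≤j≤n+m} (λ_b - λ_j + j - b - 1)/(λ_b - λ_j + j - b + r - 1)`. -/
theorem block_decrement_ratio (n m b r : ℕ) (hr1 : 1 ≤ r) (hrb : r ≤ b)
    (hbn : b ≤ n) (lam : ℕ → ℕ)
    (hpart : ∀ i j : ℕ, 1 ≤ i → i ≤ j → j ≤ n + m → lam j ≤ lam i)
    (hblock : ∀ i : ℕ, b - r + 1 ≤ i → i ≤ b → lam i = lam b)
    (hmu : ∀ i j : ℕ, 1 ≤ i → i ≤ j → j ≤ n + m →
      (if b - r + 1 ≤ j ∧ j ≤ b then lam j - 1 else lam j) ≤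
        (if b - r + 1 ≤ i ∧ i ≤ b then lam i - 1 else lam i)) :
    (∏ p ∈ (Finset.Icc 1 (n + m) ×ˢ Finset.Icc 1 (n + m)).filter
        (fun p : ℕ × ℕ => p.1 < p.2),
      (((if b - r + 1 ≤ p.1 ∧ p.1 ≤ b then (lam p.1 : ℚ) - 1 else (lam p.1 : ℚ)) -
          (if b - r + 1 ≤ p.2 ∧ p.2 ≤ b then (lam p.2 : ℚ) - 1 else (lam p.2 : ℚ)) +
          (p.2 : ℚ) - p.1) /
        ((lam p.1 : ℚ) - (lam p.2 : ℚ) + (p.2 : ℚ) - p.1))) =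
      (∏ i ∈ Finset.Icc 1 (b - r),
          (((lam i : ℚ) - lam b + b + 1 - i) / ((lam i : ℚ) - lam b + b - r + 1 - i))) *
        ∏ j ∈ Finset.Icc (b + 1) (n + m),
          (((lam b : ℚ) - lam j + j - b - 1) / ((lam b : ℚ) - lam j + j - b + r - 1)) := by
  have hbnm : b ≤ n + m := le_trans hbn (Nat.le_add_right n m)
  have hbr : b - r + 1 ≤ b := by omega
  set F : ℕ × ℕ → ℚ := fun p =>
    ((if b - r + 1 ≤ p.1 ∧ p.1 ≤ b then (lam p.1 : ℚ) - 1 else (lam p.1 : ℚ)) -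
      (if b - r + 1 ≤ p.2 ∧ p.2 ≤ b then (lam p.2 : ℚ) - 1 else (lam p.2 : ℚ)) +
      (p.2 : ℚ) - p.1) /
    ((lam p.1 : ℚ) - (lam p.2 : ℚ) + (p.2 : ℚ) - p.1) with hFdef
  have hden : ∀ i j : ℕ, 1 ≤ i → i < j → j ≤ n + m →
      (0 : ℚ) < (lam i : ℚ) - (lam j : ℚ) + (j : ℚ) - i := by
    intro i j h1 h2 h3
    have h4 : lam j ≤ lam i := hpart i j h1 (le_of_lt h2) h3
    have h5 : (lam j : ℚ) ≤ lam i := by exact_mod_cast h4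
    have h6 : (i : ℚ) < j := by exact_mod_cast h2
    linarith
  set T₁ : Finset (ℕ × ℕ) := Finset.Icc 1 (b - r) ×ˢ Finset.Icc (b - r + 1) b with hT1
  set T₂ : Finset (ℕ × ℕ) := Finset.Icc (b - r + 1) b ×ˢ Finset.Icc (b + 1) (n + m) with hT2
  have hsub : T₁ ∪ T₂ ⊆ (Finset.Icc 1 (n + m) ×ˢ Finset.Icc 1 (n + m)).filter
      (fun p : ℕ × ℕ => p.1 < p.2) := by
    intro p hp
    simp only [hT1, hT2, Finset.mem_union, Finset.mem_product, Finset.mem_Icc] at hp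
    simp only [Finset.mem_filter, Finset.mem_product, Finset.mem_Icc]
    omega
  have hdisj : Disjoint T₁ T₂ := by
    rw [Finset.disjoint_left]
    intro p hp hp'
    simp only [hT1, hT2, Finset.mem_product, Finset.mem_Icc] at hp hp'
    omega
  have hone : ∀ p ∈ (Finset.Icc 1 (n + m) ×ˢ Finset.Icc 1 (n + m)).filter
      (fun p : ℕ × ℕ => p.1 < p.2), p ∉ T₁ ∪ T₂ → F p = 1 := by
    intro p hp hnp
    simp only [Finset.mem_filter, Finset.mem_product, Finset.mem_Icc] at hp
    simp only [hT1, hT2, Finset.mem_union, Finset.mem_product, Finset.mem_Icc, not_or,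
      not_and_or, not_le] at hnp
    have hd := hden p.1 p.2 hp.1.1.1 hp.2 hp.1.2.2
    simp only [hFdef]
    by_cases hc1 : b - r + 1 ≤ p.1 ∧ p.1 ≤ b
    · by_cases hc2 : b - r + 1 ≤ p.2 ∧ p.2 ≤ b
      · rw [if_pos hc1, if_pos hc2, div_eq_one_iff_eq (ne_of_gt hd)]
        ring
      · exfalso
        obtain ⟨h1, h2⟩ := hp
        omega
    · by_cases hc2 : b - r + 1 ≤ p.2 ∧ p.2 ≤ b
      · exfalso
        obtain ⟨h1, h2⟩ := hp
        omega
      · rw [if_neg hc1, if_neg hc2, div_eq_one_iff_eq (ne_of_gt hd)]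
  rw [← Finset.prod_subset hsub hone, Finset.prod_union hdisj]
  congr 1
  · -- first block
    rw [hT1, Finset.prod_product]
    apply Finset.prod_congr rfl
    intro i hi
    simp only [Finset.mem_Icc] at hi
    have hi1 : 1 ≤ i := hi.1
    have hibr : i ≤ b - r := hi.2
    have hlam : lam b ≤ lam i := hpart i b hi1 (by omega) hbnm
    have hlam' : (lam b : ℚ) ≤ lam i := by exact_mod_cast hlam
    have hnz : ∀ j, b - r + 1 ≤ j → j ≤ b →
        (fun j : ℕ => (lam i : ℚ) - lam b + j - i) j ≠ 0 := by
      intro j hj1 hj2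
      have : (i : ℚ) < j := by exact_mod_cast (by omega : i < j)
      simp only
      intro hzero
      linarith
    have key := tele_aux (fun j : ℕ => (lam i : ℚ) - lam b + j - i) (b - r + 1) b hbr hnz
    have step : ∀ j ∈ Finset.Icc (b - r + 1) b, F (i, j) =
        (fun j : ℕ => (lam i : ℚ) - lam b + j - i) (j + 1) /
          (fun j : ℕ => (lam i : ℚ) - lam b + j - i) j := by
      intro j hj
      simp only [Finset.mem_Icc] at hj
      have hij : ¬(b - r + 1 ≤ i ∧ i ≤ b) := by omega
      have hjb : b - r + 1 ≤ j ∧ j ≤ b := hj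
      have hlj : lam j = lam b := hblock j hj.1 hj.2
      simp only [hFdef, if_neg hij, if_pos hjb, hlj]
      push_cast
      ring_nf
    rw [Finset.prod_congr rfl step, key]
    have : ((b - r + 1 : ℕ) : ℚ) = (b : ℚ) - r + 1 := by
      push_cast [Nat.cast_sub hrb]
      ring
    rw [this]
    push_cast
    ring_nf
  · -- second block
    rw [hT2, Finset.prod_product_right]
    apply Finset.prod_congr rfl
    intro j hj
    simp only [Finset.mem_Icc] at hj
    have hj1 : b + 1 ≤ j := hj.1
    have hj2 : j ≤ n + m := hj.2
    have hlam : lam j ≤ lam b := hpart b j (by omega) (by omega) hj2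
    have hlam' : (lam j : ℚ) ≤ lam b := by exact_mod_cast hlam
    have hnz : ∀ i, b - r + 1 ≤ i → i ≤ b →
        (fun i : ℕ => (lam b : ℚ) - lam j + j - i) i ≠ 0 := by
      intro i hi1 hi2
      have : (i : ℚ) < j := by exact_mod_cast (by omega : i < j)
      simp only
      intro hzero
      linarith
    have key := tele_aux (fun i : ℕ => (lam b : ℚ) - lam j + j - i) (b - r + 1) b hbr hnz
    have step : ∀ i ∈ Finset.Icc (b - r + 1) b, F (i, j) =
        (fun i : ℕ => (lam b : ℚ) - lam j + j - i) (i + 1) /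
          (fun i : ℕ => (lam b : ℚ) - lam j + j - i) i := by
      intro i hi
      simp only [Finset.mem_Icc] at hi
      have hib : b - r + 1 ≤ i ∧ i ≤ b := hi
      have hjc : ¬(b - r + 1 ≤ j ∧ j ≤ b) := by omega
      have hli : lam i = lam b := hblock i hi.1 hi.2
      simp only [hFdef, if_pos hib, if_neg hjc, hli]
      push_cast
      ring_nf
    rw [Finset.prod_congr rfl step, key]
    have : ((b - r + 1 : ℕ) : ℚ) = (b : ℚ) - r + 1 := by
      push_cast [Nat.cast_sub hrb]
      ring
    rw [this]
    push_cast
    ring_nf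
end

section
/- Fix p ∈ ℕ, p > 1, and τ > 0. Define X(x) = x²/(x² - 2(p-1)x + p(p-1)) and Y(x) = τ(x - p + 1)²/(x² - 2(p-1)x + p(p-1)) wherever the denominator is nonzero. Then (X - p + 1)² + ((p/τ)Y - p + 1)² + ((2p-4)/τ)·X·Y = p² - 2p + 1 holds identically in x. -/
/-- For `p ∈ ℕ`, `p > 1`, `τ > 0`, the parameterization
`X(x) = x²/(x²-2(p-1)x+p(p-1))`, `Y(x) = τ(x-p+1)²/(x²-2(p-1)x+p(p-1))`
satisfies `(X-p+1)² + ((p/τ)Y-p+1)² + ((2p-4)/τ)XY = p²-2p+1`. -/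
theorem arctic_curve_p_square (p : ℕ) (hp : 1 < p) (τ x : ℝ) (hτ : 0 < τ)
    (hden : x ^ 2 - 2 * ((p : ℝ) - 1) * x + (p : ℝ) * ((p : ℝ) - 1) ≠ 0) :
    let D : ℝ := x ^ 2 - 2 * ((p : ℝ) - 1) * x + (p : ℝ) * ((p : ℝ) - 1)
    let X : ℝ := x ^ 2 / D
    let Y : ℝ := τ * (x - (p : ℝ) + 1) ^ 2 / D
    (X - (p : ℝ) + 1) ^ 2 + (((p : ℝ) / τ) * Y - (p : ℝ) + 1) ^ 2 +
        ((2 * (p : ℝ) - 4) / τ) * X * Y = (p : ℝ) ^ 2 - 2 * (p : ℝ) + 1 := by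
  intro D X Y
  have hτ' : τ ≠ 0 := ne_of_gt hτ
  simp only [X, Y, D]
  have hD : x * (x - 2 * ((p : ℝ) - 1)) + (p : ℝ) * ((p : ℝ) - 1) ≠ 0 := by
    convert hden using 1; ring
  field_simp
  ring
end

section
/- Let u(x, y) = ((x-1)y + √((x-2)x + y²))/(y² - 1), defined for (x,y) with (x-2)x + y² > 0 and y² ≠ 1. Then u satisfies the inviscid Burgers equation u·∂u/∂x + ∂u/∂y = 0. -/
/-!
Squaring `(y² - 1) u - (x - 1) y = √((x - 2) x + y²)` gives `(x - 1 - u y)² = 1 + u²`, so `u` is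
constant along the characteristic lines `x - u y = const` and hence solves Burgers' equation.
Concretely, with `s` the square root, clearing denominators turns `u uₓ + u_y` into a multiple of
`y ((x - 1)² + y² - 1 - s²) = 0`.
-/

namespace Staircase

open Real

noncomputable def limitShape (a b : ℝ) : ℝ :=
  ((a - 1) * b + √((a - 2) * a + b ^ 2)) / (b ^ 2 - 1)

variable {x y : ℝ}

theorem hasDerivAt_limitShape_fst (h : 0 < (x - 2) * x + y ^ 2) :
    HasDerivAt (fun a => limitShape a y)
      ((y + (x - 1) / √((x - 2) * x + y ^ 2)) / (y ^ 2 - 1)) x := by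
  have hq : HasDerivAt (fun a => (a - 2) * a + y ^ 2) (2 * (x - 1)) x :=
    ((((hasDerivAt_id' x).sub_const 2).mul (hasDerivAt_id' x)).add_const (y ^ 2)).congr_deriv
      (by ring)
  refine (((((hasDerivAt_id' x).sub_const 1).mul_const y).add
    (hq.sqrt h.ne')).div_const (y ^ 2 - 1)).congr_deriv ?_
  field_simp

theorem hasDerivAt_limitShape_snd (h : 0 < (x - 2) * x + y ^ 2) (hy : y ^ 2 ≠ 1) :
    HasDerivAt (fun b => limitShape x b)
      ((((x - 1) + y / √((x - 2) * x + y ^ 2)) * (y ^ 2 - 1)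
        - ((x - 1) * y + √((x - 2) * x + y ^ 2)) * (2 * y)) / (y ^ 2 - 1) ^ 2) y := by
  have hq : HasDerivAt (fun b => (x - 2) * x + b ^ 2) (2 * y) y := by
    simpa using (hasDerivAt_pow 2 y).const_add ((x - 2) * x)
  have hden : HasDerivAt (fun b : ℝ => b ^ 2 - 1) (2 * y) y := by
    simpa using (hasDerivAt_pow 2 y).sub_const 1
  refine ((((hasDerivAt_id' y).const_mul (x - 1)).add (hq.sqrt h.ne')).div hden
    (sub_ne_zero.mpr hy)).congr_deriv ?_
  simp only [Pi.add_apply]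
  field_simp

theorem burgers_expression_eq_zero {s : ℝ} (hs : s ^ 2 = (x - 2) * x + y ^ 2) (hs0 : s ≠ 0)
    (hy : y ^ 2 ≠ 1) :
    ((x - 1) * y + s) / (y ^ 2 - 1) * ((y + (x - 1) / s) / (y ^ 2 - 1))
      + (((x - 1) + y / s) * (y ^ 2 - 1) - ((x - 1) * y + s) * (2 * y)) / (y ^ 2 - 1) ^ 2
      = 0 := by
  have hden : y ^ 2 - 1 ≠ 0 := sub_ne_zero.mpr hy
  field_simp
  linear_combination (-y) * hs

end Staircase

/-- `u(x,y) = ((x-1)y + √((x-2)x + y²))/(y² - 1)` satisfies the inviscid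
Burgers equation `u uₓ + u_y = 0` on the region `(x-2)x + y² > 0`, `y² ≠ 1`. -/
theorem burgers_staircase (x y : ℝ) (h1 : 0 < (x - 2) * x + y ^ 2) (h2 : y ^ 2 ≠ 1) :
    let u : ℝ → ℝ → ℝ := fun a b =>
      ((a - 1) * b + Real.sqrt ((a - 2) * a + b ^ 2)) / (b ^ 2 - 1)
    u x y * deriv (fun a => u a y) x + deriv (fun b => u x b) y = 0 := by
  change Staircase.limitShape x y * deriv (fun a => Staircase.limitShape a y) x
    + deriv (fun b => Staircase.limitShape x b) y = 0
  rw [(Staircase.hasDerivAt_limitShape_fst h1).deriv,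
    (Staircase.hasDerivAt_limitShape_snd h1 h2).deriv]
  exact Staircase.burgers_expression_eq_zero (Real.sq_sqrt h1.le) (Real.sqrt_pos.mpr h1).ne' h2
end

section
/- Let u(x, y) = (x - 1 - 2(x-1)y - √((x-1)² - 4y + 4y²))/(2(y - y²)), defined where (x-1)² - 4y + 4y² > 0 and y ∉ {0, 1}. Then u satisfies the inviscid Burgers equation u·∂u/∂x + ∂u/∂y = 0. -/
/-!
Write `X = x - 1`, `s = √(X² - 4y + 4y²)` and `ξ = x - 1 - y u`. Then `ξ = (X + s) / (2(1 - y))`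
and `ξ + u = (X - s) / (2y)`, so `ξ (ξ + u) = (X² - s²) / (4y(1 - y)) = 1`. Hence
`u = g (x - y u)` with `g t = (t - 1)⁻¹ - (t - 1)`: `u` is constant along the characteristic
lines `x - y u = const`, the implicit form of a solution of Burgers' equation. Differentiating
this relation gives `uₓ (1 + y g') = g'` and `u_y (1 + y g') = -u g'`, and `1 + y g' = s / ξ ≠ 0`.
-/

open Filter Topology

theorem burgers_of_eventually_eq_comp {u : ℝ → ℝ → ℝ} {g : ℝ → ℝ} {x y : ℝ}
    (hux : DifferentiableAt ℝ (fun a => u a y) x) (huy : DifferentiableAt ℝ (fun b => u x b) y)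
    (hg : DifferentiableAt ℝ g (x - y * u x y))
    (hx : ∀ᶠ a in 𝓝 x, u a y = g (a - y * u a y))
    (hy : ∀ᶠ b in 𝓝 y, u x b = g (x - b * u x b))
    (hnd : 1 + y * deriv g (x - y * u x y) ≠ 0) :
    u x y * deriv (fun a => u a y) x + deriv (fun b => u x b) y = 0 := by
  set g' := deriv g (x - y * u x y)
  have hux' : deriv (fun a => u a y) x = g' * (1 - y * deriv (fun a => u a y) x) :=
    (hg.hasDerivAt.comp x ((hasDerivAt_id x).sub (hux.hasDerivAt.const_mul y))
      |>.congr_of_eventuallyEq hx).deriv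
  have huy' : deriv (fun b => u x b) y = g' * (0 - (1 * u x y + y * deriv (fun b => u x b) y)) :=
    (hg.hasDerivAt.comp y ((hasDerivAt_const y x).sub ((hasDerivAt_id y).mul huy.hasDerivAt))
      |>.congr_of_eventuallyEq hy).deriv
  have : (u x y * deriv (fun a => u a y) x + deriv (fun b => u x b) y) * (1 + y * g') = 0 := by
    linear_combination u x y * hux' + huy'
  exact (mul_eq_zero.1 this).resolve_right hnd

noncomputable def squareSolution (a b : ℝ) : ℝ :=
  (a - 1 - 2 * (a - 1) * b - √((a - 1) ^ 2 - 4 * b + 4 * b ^ 2)) / (2 * (b - b ^ 2))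

noncomputable def squareProfile (t : ℝ) : ℝ := (t - 1)⁻¹ - (t - 1)

theorem hasDerivAt_squareProfile {t : ℝ} (ht : t - 1 ≠ 0) :
    HasDerivAt squareProfile (-((t - 1) ^ 2)⁻¹ - 1) t := by
  have h := (((hasDerivAt_id t).sub_const 1).inv ht).sub ((hasDerivAt_id t).sub_const 1)
  exact h.congr_deriv (by simp only [id]; ring)

section

variable {a b : ℝ}

theorem self_sub_sq_ne_zero (hb0 : b ≠ 0) (hb1 : b ≠ 1) : b - b ^ 2 ≠ 0 := by
  have : b - b ^ 2 = b * (1 - b) := by ring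
  rw [this]
  exact mul_ne_zero hb0 (sub_ne_zero.2 hb1.symm)

theorem two_mul_sub_sq_mul_squareSolution (hb0 : b ≠ 0) (hb1 : b ≠ 1) :
    2 * (b - b ^ 2) * squareSolution a b =
      (a - 1) * (1 - 2 * b) - √((a - 1) ^ 2 - 4 * b + 4 * b ^ 2) := by
  rw [squareSolution, mul_div_cancel₀ _ (mul_ne_zero two_ne_zero (self_sub_sq_ne_zero hb0 hb1))]
  ring

theorem characteristic_mul_eq_one (hD : 0 ≤ (a - 1) ^ 2 - 4 * b + 4 * b ^ 2) (hb0 : b ≠ 0)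
    (hb1 : b ≠ 1) :
    (a - b * squareSolution a b - 1) * (a - b * squareSolution a b - 1 + squareSolution a b) =
      1 := by
  have hu := two_mul_sub_sq_mul_squareSolution (a := a) hb0 hb1
  have hs := Real.sq_sqrt hD
  have : 4 * (b - b ^ 2) * ((a - b * squareSolution a b - 1) *
      (a - b * squareSolution a b - 1 + squareSolution a b) - 1) = 0 := by
    linear_combination ((a - 1) * (1 - 2 * b) - 2 * (b - b ^ 2) * squareSolution a b
      + √((a - 1) ^ 2 - 4 * b + 4 * b ^ 2)) * hu - hs
  have h4 : 4 * (b - b ^ 2) ≠ 0 := mul_ne_zero four_ne_zero (self_sub_sq_ne_zero hb0 hb1)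
  exact sub_eq_zero.1 ((mul_eq_zero.1 this).resolve_left h4)

theorem squareSolution_eq_squareProfile (hD : 0 ≤ (a - 1) ^ 2 - 4 * b + 4 * b ^ 2) (hb0 : b ≠ 0)
    (hb1 : b ≠ 1) : squareSolution a b = squareProfile (a - b * squareSolution a b) := by
  rw [squareProfile, inv_eq_of_mul_eq_one_right (characteristic_mul_eq_one hD hb0 hb1)]
  ring

theorem one_add_mul_deriv_squareProfile_ne_zero (hD : 0 < (a - 1) ^ 2 - 4 * b + 4 * b ^ 2)
    (hb0 : b ≠ 0) (hb1 : b ≠ 1) :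
    1 + b * deriv squareProfile (a - b * squareSolution a b) ≠ 0 := by
  set ξ := a - b * squareSolution a b - 1 with hξdef
  have hξ : ξ * (ξ + squareSolution a b) = 1 := characteristic_mul_eq_one hD.le hb0 hb1
  have hξ0 : ξ ≠ 0 := left_ne_zero_of_mul_eq_one hξ
  rw [(hasDerivAt_squareProfile hξ0).deriv]
  have hu := two_mul_sub_sq_mul_squareSolution (a := a) hb0 hb1
  have : (1 + b * (-(ξ ^ 2)⁻¹ - 1)) * ξ = √((a - 1) ^ 2 - 4 * b + 4 * b ^ 2) := by
    rw [← inv_pow, inv_eq_of_mul_eq_one_right hξ]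
    linear_combination (-b * (ξ + squareSolution a b)) * hξ + (1 - 2 * b) * hξdef - hu
  intro h
  rw [h, zero_mul] at this
  exact (Real.sqrt_pos.2 hD).ne this

theorem eventually_squareSolution_eq_squareProfile {x y : ℝ}
    (hD : 0 < (x - 1) ^ 2 - 4 * y + 4 * y ^ 2) (hy0 : y ≠ 0) (hy1 : y ≠ 1) :
    ∀ᶠ p : ℝ × ℝ in 𝓝 (x, y),
      squareSolution p.1 p.2 = squareProfile (p.1 - p.2 * squareSolution p.1 p.2) := by
  have hD' : ∀ᶠ p : ℝ × ℝ in 𝓝 (x, y), 0 < (p.1 - 1) ^ 2 - 4 * p.2 + 4 * p.2 ^ 2 :=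
    (by fun_prop : Continuous fun p : ℝ × ℝ => (p.1 - 1) ^ 2 - 4 * p.2 + 4 * p.2 ^ 2)
      |>.continuousAt.eventually (lt_mem_nhds hD)
  filter_upwards [hD', continuousAt_snd.eventually_ne hy0, continuousAt_snd.eventually_ne hy1]
    with p hp hp0 hp1 using squareSolution_eq_squareProfile hp.le hp0 hp1

end

/-- `u(x,y) = (x - 1 - 2(x-1)y - √((x-1)² - 4y + 4y²))/(2(y - y²))` satisfies the
inviscid Burgers equation `u uₓ + u_y = 0` where `(x-1)² - 4y + 4y² > 0`,
`y ∉ {0, 1}`. -/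
theorem burgers_square (x y : ℝ) (h1 : 0 < (x - 1) ^ 2 - 4 * y + 4 * y ^ 2)
    (h0 : y ≠ 0) (h1' : y ≠ 1) :
    let u : ℝ → ℝ → ℝ := fun a b =>
      (a - 1 - 2 * (a - 1) * b - Real.sqrt ((a - 1) ^ 2 - 4 * b + 4 * b ^ 2)) /
        (2 * (b - b ^ 2))
    u x y * deriv (fun a => u a y) x + deriv (fun b => u x b) y = 0 := by
  show squareSolution x y * deriv (fun a => squareSolution a y) x +
    deriv (fun b => squareSolution x b) y = 0
  have hev := eventually_squareSolution_eq_squareProfile h1 h0 h1'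
  have hden : 2 * (y - y ^ 2) ≠ 0 := mul_ne_zero two_ne_zero (self_sub_sq_ne_zero h0 h1')
  have hξ : x - y * squareSolution x y - 1 ≠ 0 :=
    left_ne_zero_of_mul_eq_one (characteristic_mul_eq_one h1.le h0 h1')
  apply burgers_of_eventually_eq_comp
  · unfold squareSolution; fun_prop (disch := positivity)
  · unfold squareSolution; fun_prop (disch := first | positivity | exact hden)
  · exact (hasDerivAt_squareProfile hξ).differentiableAt
  · exact (tendsto_id.prodMk_nhds tendsto_const_nhds).eventually hev
  · exact (tendsto_const_nhds.prodMk_nhds tendsto_id).eventually hev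
  · exact one_add_mul_deriv_squareProfile_ne_zero h1 h0 h1'
end

section
/- Let F(x,y) be a twice continuously differentiable function on an open subset of ℝ² (with complex values allowed) satisfying e^{-F_x} + F_y/x = 0 with x ≠ 0, and define z = e^{F_y}, w = e^{-F_x}, u = -w·x. Then u satisfies the inviscid Burgers equation u·∂u/∂x + ∂u/∂y = 0. -/
/-!
The equation says exactly that `u = F_y`, so `u_x = F_yx` and `u_y = F_yy`. Differentiating the
equation in `y` gives `F_yy = x w F_xy`, hence `u u_x + u_y = x w (F_xy - F_yx)`, which vanishes by
the symmetry of second derivatives of a `C²` function.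
-/

open Filter Topology

section Slices

variable {𝕜 : Type*} [NontriviallyNormedField 𝕜] {E F G : Type*}
  [NormedAddCommGroup E] [NormedSpace 𝕜 E] [NormedAddCommGroup F] [NormedSpace 𝕜 F]
  [NormedAddCommGroup G] [NormedSpace 𝕜 G]

theorem HasFDerivAt.hasDerivAt_slice_fst {g : 𝕜 × F → G} {g' : 𝕜 × F →L[𝕜] G} {a : 𝕜} {b : F}
    (hg : HasFDerivAt g g' (a, b)) : HasDerivAt (fun x => g (x, b)) (g' (1, 0)) a :=
  hg.comp_hasDerivAt a ((hasDerivAt_id a).prodMk (hasDerivAt_const a b))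

theorem HasFDerivAt.hasDerivAt_slice_snd {g : E × 𝕜 → G} {g' : E × 𝕜 →L[𝕜] G} {a : E} {b : 𝕜}
    (hg : HasFDerivAt g g' (a, b)) : HasDerivAt (fun y => g (a, y)) (g' (0, 1)) b :=
  hg.comp_hasDerivAt b ((hasDerivAt_const b a).prodMk (hasDerivAt_id b))

end Slices

section EventuallySlices

variable {α β : Type*} [TopologicalSpace α] [TopologicalSpace β] {P : α × β → Prop} {p : α × β}

theorem Filter.Eventually.slice_fst (h : ∀ᶠ q in 𝓝 p, P q) : ∀ᶠ a in 𝓝 p.1, P (a, p.2) :=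
  ((continuous_id.prodMk continuous_const).tendsto p.1).eventually h

theorem Filter.Eventually.slice_snd (h : ∀ᶠ q in 𝓝 p, P q) : ∀ᶠ b in 𝓝 p.2, P (p.1, b) :=
  ((continuous_const.prodMk continuous_id).tendsto p.2).eventually h

end EventuallySlices

theorem ContDiffOn.hasFDerivAt_of_eqOn_fderiv_apply {𝕜 E G : Type*} [NontriviallyNormedField 𝕜]
    [NormedAddCommGroup E] [NormedSpace 𝕜 E] [NormedAddCommGroup G] [NormedSpace 𝕜 G]
    {f g : E → G} {s : Set E} {p : E} (hf : ContDiffOn 𝕜 2 f s) (hs : IsOpen s) (v : E)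
    (hg : s.EqOn g fun q => fderiv 𝕜 f q v) (hp : p ∈ s) :
    HasFDerivAt g ((fderiv 𝕜 (fderiv 𝕜 f) p).flip v) p := by
  have hf' : DifferentiableAt 𝕜 (fderiv 𝕜 f) p :=
    ((hf.fderiv_of_isOpen hs (m := 1) (by norm_num)).contDiffAt (hs.mem_nhds hp)).differentiableAt
      (by norm_num)
  have hgv := hf'.hasFDerivAt.clm_apply (hasFDerivAt_const v p)
  rw [ContinuousLinearMap.comp_zero, zero_add] at hgv
  exact hgv.congr_of_eventuallyEq (eventuallyEq_of_mem (hs.mem_nhds hp) hg)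

section PartialDerivatives

variable {E : Type*} [NormedAddCommGroup E] [NormedSpace ℝ E] {s : Set (ℝ × ℝ)} {p : ℝ × ℝ}
  {F Fx Fy : ℝ → ℝ → E}

theorem hasFDerivAt_partial_fst (hs : IsOpen s) (hF : ContDiffOn ℝ 2 (fun q => F q.1 q.2) s)
    (hFx : ∀ q ∈ s, HasDerivAt (fun a => F a q.2) (Fx q.1 q.2) q.1) (hp : p ∈ s) :
    HasFDerivAt (fun q => Fx q.1 q.2)
      ((fderiv ℝ (fderiv ℝ fun q => F q.1 q.2) p).flip (1, 0)) p := by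
  refine hF.hasFDerivAt_of_eqOn_fderiv_apply hs (1, 0) (fun q hq => ?_) hp
  have hFq := (hF.differentiableOn (by norm_num)).differentiableAt (hs.mem_nhds hq)
  exact (hFx q hq).unique hFq.hasFDerivAt.hasDerivAt_slice_fst

theorem hasFDerivAt_partial_snd (hs : IsOpen s) (hF : ContDiffOn ℝ 2 (fun q => F q.1 q.2) s)
    (hFy : ∀ q ∈ s, HasDerivAt (fun b => F q.1 b) (Fy q.1 q.2) q.2) (hp : p ∈ s) :
    HasFDerivAt (fun q => Fy q.1 q.2)
      ((fderiv ℝ (fderiv ℝ fun q => F q.1 q.2) p).flip (0, 1)) p := by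
  refine hF.hasFDerivAt_of_eqOn_fderiv_apply hs (0, 1) (fun q hq => ?_) hp
  have hFq := (hF.differentiableOn (by norm_num)).differentiableAt (hs.mem_nhds hq)
  exact (hFy q hq).unique hFq.hasFDerivAt.hasDerivAt_slice_snd

theorem exists_hasDerivAt_mixed_partials (hs : IsOpen s)
    (hF : ContDiffOn ℝ 2 (fun q => F q.1 q.2) s)
    (hFx : ∀ q ∈ s, HasDerivAt (fun a => F a q.2) (Fx q.1 q.2) q.1)
    (hFy : ∀ q ∈ s, HasDerivAt (fun b => F q.1 b) (Fy q.1 q.2) q.2) (hp : p ∈ s) :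
    ∃ c, HasDerivAt (fun b => Fx p.1 b) c p.2 ∧ HasDerivAt (fun a => Fy a p.2) c p.1 := by
  refine ⟨_, (hasFDerivAt_partial_fst hs hF hFx hp).hasDerivAt_slice_snd, ?_⟩
  convert (hasFDerivAt_partial_snd hs hF hFy hp).hasDerivAt_slice_fst using 1
  exact ((hF.contDiffAt (hs.mem_nhds hp)).isSymmSndFDerivAt (by simp)).eq _ _

end PartialDerivatives

/-- If `F` is `C²` (complex valued) on an open set where it satisfies
`e^{-F_x} + F_y/x = 0` with `x ≠ 0`, then `u = -w x` with `w = e^{-F_x}`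
satisfies the inviscid Burgers equation `u uₓ + u_y = 0`. -/
theorem burgers_from_F (s : Set (ℝ × ℝ)) (hs : IsOpen s) (F Fx Fy : ℝ → ℝ → ℂ)
    (hC2 : ContDiffOn ℝ 2 (fun p : ℝ × ℝ => F p.1 p.2) s)
    (hFx : ∀ p ∈ s, HasDerivAt (fun a => F a p.2) (Fx p.1 p.2) p.1)
    (hFy : ∀ p ∈ s, HasDerivAt (fun b => F p.1 b) (Fy p.1 p.2) p.2)
    (hx0 : ∀ p ∈ s, p.1 ≠ 0)
    (hPDE : ∀ p ∈ s, Complex.exp (-Fx p.1 p.2) + Fy p.1 p.2 / (p.1 : ℂ) = 0) :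
    ∀ p ∈ s,
      let u : ℝ → ℝ → ℂ := fun a b => -Complex.exp (-Fx a b) * (a : ℂ)
      u p.1 p.2 * deriv (fun a => u a p.2) p.1 +
        deriv (fun b => u p.1 b) p.2 = 0 := by
  intro p hp u
  have hnhds : ∀ᶠ q in 𝓝 p, q ∈ s := hs.mem_nhds hp
  have hu : ∀ᶠ q in 𝓝 p, u q.1 q.2 = Fy q.1 q.2 := hnhds.mono fun q hq => by
    have hx : (q.1 : ℂ) ≠ 0 := by exact_mod_cast hx0 q hq
    have h := hPDE q hq
    field_simp at h
    linear_combination -h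
  obtain ⟨c, hFxy, hFyx⟩ := exists_hasDerivAt_mixed_partials hs hC2 hFx hFy hp
  have hFyy := (hasFDerivAt_partial_snd hs hC2 hFy hp).hasDerivAt_slice_snd
  have hPDEy := ((hFxy.neg.cexp).add (hFyy.div_const (p.1 : ℂ))).unique
    ((hasDerivAt_const p.2 0).congr_of_eventuallyEq (hnhds.mono hPDE).slice_snd)
  rw [(hFyx.congr_of_eventuallyEq hu.slice_fst).deriv,
    (hFyy.congr_of_eventuallyEq hu.slice_snd).deriv]
  have hx : (p.1 : ℂ) ≠ 0 := by exact_mod_cast hx0 p hp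
  field_simp at hPDEy
  linear_combination hPDEy
end
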